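/- arXiv:1707.06250 — 3 statements merged into one kernel-verified Lean document; each statement's English description precedes it below -/
import Mathlib

section
/- Let p : [t₀,∞) → ℝ be a positive differentiable nonincreasing function and K ≥ 1 a real constant. Suppose there are functions E₁, E₃ with |E₁(t)| ≤ C·log(log t)/log t and |E₃(t)| ≤ C·log(log t)/(t·(log t)^(K+2)) such that p'(t) = -K·p(t)/(t·log t)·(1+E₁(t)) + E₃(t) for all t ≥ t₀. Then there exists a constant c₀ ≥ 0 such that p(t) = c₀·(log t)^(−K)·(1 + O(log(log t)/log t)) as t → ∞. -/
/-!
Multiplying by `(log t)^K` cancels the main term of the rate equation: `q = p·(log t)^K`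
satisfies `|q'| ≤ C·(K q + 1)·F'`, where `F = -(log log t + 1)/log t` has derivative
`F' = log log t/(t log² t)`. Gronwall's inequality bounds `q`, hence `|q'| ≤ M·F'` for a constant
`M`; since `F` increases to `0`, `q` converges to some `c₀ ≥ 0` with
`|q - c₀| ≤ M·(-F) = O(log log t/log t)`.
-/

open Set Filter Real Topology

section DerivComparison

variable {T : ℝ}

lemma monotoneOn_Ici_of_hasDerivAt_nonneg {f f' : ℝ → ℝ}
    (hf : ∀ t ∈ Ici T, HasDerivAt f (f' t) t) (hf' : ∀ t ∈ Ici T, 0 ≤ f' t) :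
    MonotoneOn f (Ici T) :=
  monotoneOn_of_hasDerivWithinAt_nonneg (convex_Ici T)
    (fun t ht => (hf t ht).continuousAt.continuousWithinAt)
    (fun t ht => (hf t (interior_subset ht)).hasDerivWithinAt)
    (fun t ht => hf' t (interior_subset ht))

lemma abs_sub_le_sub_of_abs_hasDerivAt_le {f f' g g' : ℝ → ℝ}
    (hf : ∀ t ∈ Ici T, HasDerivAt f (f' t) t) (hg : ∀ t ∈ Ici T, HasDerivAt g (g' t) t)
    (hfg : ∀ t ∈ Ici T, |f' t| ≤ g' t) {s t : ℝ} (hs : T ≤ s) (hst : s ≤ t) :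
    |f t - f s| ≤ g t - g s := by
  have hsub := monotoneOn_Ici_of_hasDerivAt_nonneg (fun u hu => (hg u hu).sub (hf u hu))
    (fun u hu => by linarith [(abs_le.1 (hfg u hu)).2]) hs (hs.trans hst) hst
  have hadd := monotoneOn_Ici_of_hasDerivAt_nonneg (fun u hu => (hg u hu).add (hf u hu))
    (fun u hu => by linarith [(abs_le.1 (hfg u hu)).1]) hs (hs.trans hst) hst
  simp only [Pi.sub_apply, Pi.add_apply] at hsub hadd
  rw [abs_le]
  constructor <;> linarith

/-- `f + g` is nondecreasing and `f - g` nonincreasing, so `c = sup (f + g)` lies between them;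
`g ≤ 0` makes `f - g ≥ f + g`. -/
lemma exists_abs_sub_le_of_abs_hasDerivAt_le {f f' g g' : ℝ → ℝ}
    (hf : ∀ t ∈ Ici T, HasDerivAt f (f' t) t) (hg : ∀ t ∈ Ici T, HasDerivAt g (g' t) t)
    (hfg : ∀ t ∈ Ici T, |f' t| ≤ g' t) (hg_nonpos : ∀ t ∈ Ici T, g t ≤ 0) :
    ∃ c, ∀ t ∈ Ici T, |f t - c| ≤ -g t := by
  have hsup : ∀ u ∈ Ici T, ∀ t ∈ Ici T, f u + g u ≤ f t - g t := by
    intro u hu t ht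
    have hgu := hg_nonpos u hu
    have hgt := hg_nonpos t ht
    rcases le_total u t with hut | htu
    · linarith [(abs_le.1 (abs_sub_le_sub_of_abs_hasDerivAt_le hf hg hfg hu hut)).1]
    · linarith [(abs_le.1 (abs_sub_le_sub_of_abs_hasDerivAt_le hf hg hfg ht htu)).2]
  have hbdd : BddAbove ((f + g) '' Ici T) := by
    refine ⟨f T - g T, ?_⟩
    rintro _ ⟨u, hu, rfl⟩
    exact hsup u hu T self_mem_Ici
  refine ⟨sSup ((f + g) '' Ici T), fun t ht => abs_le.2 ⟨?_, ?_⟩⟩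
  · have : sSup ((f + g) '' Ici T) ≤ f t - g t := by
      refine csSup_le ⟨_, mem_image_of_mem _ ht⟩ ?_
      rintro _ ⟨u, hu, rfl⟩
      exact hsup u hu t ht
    linarith
  · have : f t + g t ≤ sSup ((f + g) '' Ici T) := le_csSup hbdd ⟨t, ht, rfl⟩
    linarith

lemma le_mul_exp_sub_of_hasDerivAt_le_mul {w w' g g' : ℝ → ℝ}
    (hw : ∀ t ∈ Ici T, HasDerivAt w (w' t) t) (hg : ∀ t ∈ Ici T, HasDerivAt g (g' t) t)
    (hw_pos : ∀ t ∈ Ici T, 0 < w t) (hwg : ∀ t ∈ Ici T, w' t ≤ g' t * w t)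
    {t : ℝ} (ht : T ≤ t) : w t ≤ w T * exp (g t - g T) := by
  have hmono : MonotoneOn (fun s => g s - log (w s)) (Ici T) := by
    refine monotoneOn_Ici_of_hasDerivAt_nonneg
      (fun s hs => (hg s hs).sub ((hw s hs).log (hw_pos s hs).ne')) fun s hs => ?_
    rw [sub_nonneg, div_le_iff₀ (hw_pos s hs)]
    exact hwg s hs
  have hTt : g T - log (w T) ≤ g t - log (w t) := hmono self_mem_Ici ht ht
  calc w t = exp (log (w t)) := (exp_log (hw_pos t ht)).symm
    _ ≤ exp (log (w T) + (g t - g T)) := exp_le_exp.2 (by linarith)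
    _ = w T * exp (g t - g T) := by rw [exp_add, exp_log (hw_pos T self_mem_Ici)]

/-- Gronwall bounds `K q + 1` by a constant `M`, after which `|q'| ≤ M g'` makes `q` converge. -/
lemma exists_abs_sub_le_of_abs_hasDerivAt_le_mul_add_one {K : ℝ} {q q' g g' : ℝ → ℝ}
    (hK : 0 ≤ K) (hq : ∀ t ∈ Ici T, HasDerivAt q (q' t) t)
    (hg : ∀ t ∈ Ici T, HasDerivAt g (g' t) t) (hq_nonneg : ∀ t ∈ Ici T, 0 ≤ q t)
    (hg_nonpos : ∀ t ∈ Ici T, g t ≤ 0) (hg_tendsto : Tendsto g atTop (𝓝 0))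
    (hqg : ∀ t ∈ Ici T, |q' t| ≤ g' t * (K * q t + 1)) :
    ∃ c, 0 ≤ c ∧ ∃ M, 0 < M ∧ ∀ t ∈ Ici T, |q t - c| ≤ M * -g t := by
  have hw_pos : ∀ t ∈ Ici T, 0 < K * q t + 1 := fun t ht => by
    nlinarith [hq_nonneg t ht]
  have hg'_nonneg : ∀ t ∈ Ici T, 0 ≤ g' t := fun t ht =>
    nonneg_of_mul_nonneg_left ((abs_nonneg _).trans (hqg t ht)) (hw_pos t ht)
  set M := (K * q T + 1) * exp (-(K * g T))
  have hM : 0 < M := mul_pos (hw_pos T self_mem_Ici) (exp_pos _)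
  have hw_le : ∀ t ∈ Ici T, K * q t + 1 ≤ M := fun t ht => by
    refine (le_mul_exp_sub_of_hasDerivAt_le_mul (fun s hs => ((hq s hs).const_mul K).add_const 1)
      (fun s hs => (hg s hs).const_mul K) hw_pos (fun s hs => ?_) ht).trans ?_
    · rw [mul_assoc]
      exact mul_le_mul_of_nonneg_left ((le_abs_self _).trans (hqg s hs)) hK
    · refine mul_le_mul_of_nonneg_left (exp_le_exp.2 ?_) (hw_pos T self_mem_Ici).le
      nlinarith [hg_nonpos t ht]
  obtain ⟨c, hc⟩ := exists_abs_sub_le_of_abs_hasDerivAt_le hq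
    (fun t ht => (hg t ht).const_mul M)
    (fun t ht => (hqg t ht).trans <| by
      rw [mul_comm M]
      exact mul_le_mul_of_nonneg_left (hw_le t ht) (hg'_nonneg t ht))
    (fun t ht => mul_nonpos_of_nonneg_of_nonpos hM.le (hg_nonpos t ht))
  refine ⟨c, ?_, M, hM, fun t ht => by simpa only [mul_neg] using hc t ht⟩
  have hc_ge : ∀ᶠ t in atTop, M * g t ≤ c := by
    filter_upwards [eventually_ge_atTop T] with t ht
    linarith [(abs_le.1 (hc t ht)).2, hq_nonneg t ht]
  simpa using le_of_tendsto (hg_tendsto.const_mul M) hc_ge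

end DerivComparison

lemma hasDerivAt_mul_log_rpow {p : ℝ → ℝ} {K e₁ e₃ t : ℝ} (ht : 1 < t)
    (hp : HasDerivAt p (-(K * p t / (t * log t)) * (1 + e₁) + e₃) t) :
    HasDerivAt (fun s => p s * log s ^ K)
      (-(K * (p t * log t ^ K) / (t * log t)) * e₁ + e₃ * log t ^ K) t := by
  have hlog : log t ≠ 0 := (log_pos ht).ne'
  have hpow : HasDerivAt (fun s => log s ^ K) (K * log t ^ (K - 1) * t⁻¹) t :=
    (hasDerivAt_rpow_const (Or.inl hlog)).comp t (hasDerivAt_log (by linarith))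
  refine (hp.mul hpow).congr_deriv ?_
  rw [rpow_sub_one hlog]
  field_simp
  ring

lemma abs_deriv_mul_log_rpow_le {K C x e₁ e₃ t : ℝ} (ht : 1 < t) (hK : 0 ≤ K) (hx : 0 ≤ x)
    (he₁ : |e₁| ≤ C * log (log t) / log t)
    (he₃ : |e₃| ≤ C * log (log t) / (t * log t ^ (K + 2))) :
    |-(K * x / (t * log t)) * e₁ + e₃ * log t ^ K| ≤
      C * (log (log t) / (t * log t ^ 2)) * (K * x + 1) := by
  have hlog := log_pos ht
  have ht0 : 0 < t := by linarith
  calc _ ≤ |-(K * x / (t * log t)) * e₁| + |e₃ * log t ^ K| := abs_add_le _ _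
    _ = K * x / (t * log t) * |e₁| + |e₃| * log t ^ K := by
      rw [abs_mul, abs_mul, abs_neg, abs_of_nonneg (by positivity),
        abs_of_nonneg (rpow_nonneg hlog.le K)]
    _ ≤ K * x / (t * log t) * (C * log (log t) / log t) +
        C * log (log t) / (t * log t ^ (K + 2)) * log t ^ K := by
      gcongr
    _ = _ := by
      rw [rpow_add hlog, rpow_two]
      have := (rpow_pos_of_pos hlog K).ne'
      field_simp

lemma tendsto_log_log_add_one_div_log :
    Tendsto (fun t => (log (log t) + 1) / log t) atTop (𝓝 0) := by
  have hloglog : Tendsto (fun t => log (log t) / log t) atTop (𝓝 0) := by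
    simpa [Function.comp_def] using
      isLittleO_log_id_atTop.tendsto_div_nhds_zero.comp tendsto_log_atTop
  simpa [add_div] using hloglog.add (tendsto_inv_atTop_zero.comp tendsto_log_atTop)

lemma hasDerivAt_neg_log_log_add_one_div_log {t : ℝ} (ht : 1 < t) :
    HasDerivAt (fun s => -((log (log s) + 1) / log s)) (log (log t) / (t * log t ^ 2)) t := by
  have hlog : log t ≠ 0 := (log_pos ht).ne'
  have ht0 : t ≠ 0 := by positivity
  have hlog' := hasDerivAt_log ht0
  refine ((((hasDerivAt_log hlog).comp t hlog').add_const 1).div hlog' hlog).neg.congr_deriv ?_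
  simp only [Function.comp_apply]
  field_simp
  ring

lemma abs_sub_mul_rpow_neg_le {x c L K B : ℝ} (hL : 0 < L) (h : |x * L ^ K - c| ≤ B) :
    |x - c * L ^ (-K)| ≤ B * L ^ (-K) := by
  have hx : x = x * L ^ K * L ^ (-K) := by
    rw [mul_assoc, ← rpow_add hL, add_neg_cancel, rpow_zero, mul_one]
  have hL' := rpow_pos_of_pos hL (-K)
  calc |x - c * L ^ (-K)| = |(x * L ^ K - c) * L ^ (-K)| := by rw [sub_mul, ← hx]
    _ = |x * L ^ K - c| * L ^ (-K) := by rw [abs_mul, abs_of_pos hL']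
    _ ≤ B * L ^ (-K) := by gcongr

theorem effective_rate_equation_asymptotic_general
    (t₀ C K : ℝ) (hC : 0 < C) (hK : 1 ≤ K)
    (p E₁ E₃ : ℝ → ℝ)
    (hpos : ∀ t, t₀ ≤ t → 0 < p t)
    (hE₁ : ∀ t, t₀ ≤ t → |E₁ t| ≤ C * Real.log (Real.log t) / Real.log t)
    (hE₃ : ∀ t, t₀ ≤ t →
      |E₃ t| ≤ C * Real.log (Real.log t) / (t * Real.log t ^ (K + 2)))
    (hode : ∀ t, t₀ ≤ t →
      HasDerivAt p (-(K * p t / (t * Real.log t)) * (1 + E₁ t) + E₃ t) t) :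
    ∃ c₀ : ℝ, 0 ≤ c₀ ∧ ∃ C' T : ℝ, 0 < C' ∧ ∀ t, T ≤ t →
      |p t - c₀ * Real.log t ^ (-K)| ≤
        C' * (Real.log (Real.log t) / Real.log t) * Real.log t ^ (-K) := by
  set T := max t₀ (exp (exp 1))
  have hT : ∀ t ∈ Ici T, t₀ ≤ t ∧ 1 < t ∧ 1 ≤ log (log t) := fun t ht => by
    have hexp : exp (exp 1) ≤ t := (le_max_right _ _).trans ht
    have hlog : exp 1 ≤ log t := by simpa using log_le_log (exp_pos _) hexp
    refine ⟨(le_max_left _ _).trans ht, (one_lt_exp_iff.2 (exp_pos 1)).trans_le hexp, ?_⟩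
    simpa using log_le_log (exp_pos _) hlog
  have hq_pos : ∀ t ∈ Ici T, 0 < p t * log t ^ K := fun t ht =>
    mul_pos (hpos t (hT t ht).1) (rpow_pos_of_pos (log_pos (hT t ht).2.1) K)
  obtain ⟨c, hc, M, hM, hqc⟩ := exists_abs_sub_le_of_abs_hasDerivAt_le_mul_add_one
    (q := fun t => p t * log t ^ K) (g := fun t => C * -((log (log t) + 1) / log t))
    (by linarith) (fun t ht => hasDerivAt_mul_log_rpow (hT t ht).2.1 (hode t (hT t ht).1))
    (fun t ht => (hasDerivAt_neg_log_log_add_one_div_log (hT t ht).2.1).const_mul C)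
    (fun t ht => (hq_pos t ht).le)
    (fun t ht => mul_nonpos_of_nonneg_of_nonpos hC.le (neg_nonpos.2 (div_nonneg
      (by linarith [(hT t ht).2.2]) (log_pos (hT t ht).2.1).le)))
    (by simpa using tendsto_log_log_add_one_div_log.neg.const_mul C)
    (fun t ht => abs_deriv_mul_log_rpow_le (hT t ht).2.1 (by linarith) (hq_pos t ht).le
      (hE₁ t (hT t ht).1) (hE₃ t (hT t ht).1))
  refine ⟨c, hc, 2 * M * C, T, by positivity, fun t ht => ?_⟩
  obtain ⟨-, ht1, hloglog⟩ := hT t ht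
  have hlog := log_pos ht1
  refine abs_sub_mul_rpow_neg_le hlog ((hqc t ht).trans ?_)
  have hrate : (log (log t) + 1) / log t ≤ 2 * (log (log t) / log t) := by
    rw [mul_div_assoc']
    gcongr
    linarith
  nlinarith [mul_le_mul_of_nonneg_left hrate (by positivity : 0 ≤ M * C)]

/-- Calculus step deducing the non-collision asymptotic from the effective rate
equation: if `p` is positive, differentiable, nonincreasing on `[t₀,∞)` and satisfies
`p'(t) = -K·p(t)/(t·log t)·(1+E₁(t)) + E₃(t)` with `|E₁(t)| ≤ C·log log t/log t` and
`|E₃(t)| ≤ C·log log t/(t·(log t)^(K+2))`, then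
`p(t) = c₀·(log t)^(-K)·(1 + O(log log t/log t))` for some `c₀ ≥ 0`. -/
theorem effective_rate_equation_asymptotic
    (t₀ C K : ℝ) (ht₀ : 2 ≤ t₀) (hC : 0 < C) (hK : 1 ≤ K)
    (p E₁ E₃ : ℝ → ℝ)
    (hpos : ∀ t, t₀ ≤ t → 0 < p t)
    (hmono : ∀ s t, t₀ ≤ s → s ≤ t → p t ≤ p s)
    (hE₁ : ∀ t, t₀ ≤ t → |E₁ t| ≤ C * Real.log (Real.log t) / Real.log t)
    (hE₃ : ∀ t, t₀ ≤ t →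
      |E₃ t| ≤ C * Real.log (Real.log t) / (t * Real.log t ^ (K + 2)))
    (hode : ∀ t, t₀ ≤ t →
      HasDerivAt p (-(K * p t / (t * Real.log t)) * (1 + E₁ t) + E₃ t) t) :
    ∃ c₀ : ℝ, 0 ≤ c₀ ∧ ∃ C' T : ℝ, 0 < C' ∧ ∀ t, T ≤ t →
      |p t - c₀ * Real.log t ^ (-K)| ≤
        C' * (Real.log (Real.log t) / Real.log t) * Real.log t ^ (-K) :=
  effective_rate_equation_asymptotic_general t₀ C K hC hK p E₁ E₃ hpos hE₁ hE₃ hode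
end

section
/- Suppose p : [t₀,∞) → ℝ is differentiable with |p'(r)| ≤ C/(r·(log r)^(K+1)) for all r ≥ t₀, where K ≥ 1. Then for s = t·(log t)^(−α) with α > 0 and t large enough that s ≥ t₀, one has |p(s) − p(t)| ≤ C·((log s)^(−K) − (log t)^(−K))/K, and consequently |p(s) − p(t)| = O(log(log t)/(log t)^(K+1)) as t → ∞. -/
/-!
`-(log r)^(-K)/K` is an antiderivative of the majorant `1/(r (log r)^(K+1))` of `|p'|/C`, so the
fencing form of the mean value theorem gives the first bound. Since
`log s = log t - α log log t ≥ log t / 2` for large `t`, the mean value theorem for `x ↦ x^(-K)`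
on `[log s, log t]` bounds `(log s)^(-K) - (log t)^(-K)` by `2^(K+1) K α log log t / (log t)^(K+1)`.
-/

open Real Filter Set

lemma norm_sub_le_sub_of_norm_deriv_le {E : Type*} [NormedAddCommGroup E] [NormedSpace ℝ E]
    {f f' : ℝ → E} {g g' : ℝ → ℝ} {a b : ℝ} (hab : a ≤ b)
    (hf : ∀ x ∈ Icc a b, HasDerivAt f (f' x) x) (hg : ∀ x ∈ Icc a b, HasDerivAt g (g' x) x)
    (bound : ∀ x ∈ Ico a b, ‖f' x‖ ≤ g' x) : ‖f b - f a‖ ≤ g b - g a :=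
  image_norm_le_of_norm_deriv_right_le_deriv_boundary' (f := fun x => f x - f a)
    (B := fun x => g x - g a)
    (fun x hx => (hf x hx).continuousAt.continuousWithinAt.sub continuousWithinAt_const)
    (fun x hx => ((hf x (Ico_subset_Icc_self hx)).sub_const (f a)).hasDerivWithinAt)
    (by simp)
    (fun x hx => (hg x hx).continuousAt.continuousWithinAt.sub continuousWithinAt_const)
    (fun x hx => ((hg x (Ico_subset_Icc_self hx)).sub_const (g a)).hasDerivWithinAt)
    bound (right_mem_Icc.2 hab)

lemma hasDerivAt_log_rpow_neg (K : ℝ) {x : ℝ} (hx : 1 < x) :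
    HasDerivAt (fun y => log y ^ (-K)) (-K / (x * log x ^ (K + 1))) x := by
  have hlog : 0 < log x := log_pos hx
  convert (hasDerivAt_log (by linarith)).rpow_const (p := -K) (Or.inl hlog.ne') using 1
  rw [show -K - 1 = -(K + 1) by ring, rpow_neg hlog.le]
  field_simp

theorem abs_sub_le_of_abs_deriv_le_div_mul_log_rpow {p : ℝ → ℝ} {C K a b : ℝ} (hK : K ≠ 0)
    (ha : 1 < a) (hab : a ≤ b) (hdiff : ∀ r ∈ Icc a b, DifferentiableAt ℝ p r)
    (hd : ∀ r ∈ Icc a b, |deriv p r| ≤ C / (r * log r ^ (K + 1))) :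
    |p a - p b| ≤ C * (log a ^ (-K) - log b ^ (-K)) / K := by
  have hg : ∀ x ∈ Icc a b, HasDerivAt (fun y => -(C / K) * log y ^ (-K))
      (C / (x * log x ^ (K + 1))) x := fun x hx => by
    refine ((hasDerivAt_log_rpow_neg K (ha.trans_le hx.1)).const_mul (-(C / K))).congr_deriv ?_
    field_simp
  have := norm_sub_le_sub_of_norm_deriv_le hab (fun x hx => (hdiff x hx).hasDerivAt) hg
    (fun x hx => hd x (Ico_subset_Icc_self hx))
  rw [abs_sub_comm, ← Real.norm_eq_abs]
  convert this using 1
  field_simp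
  ring

lemma rpow_neg_sub_rpow_neg_le {K u v : ℝ} (hK : 0 ≤ K) (hu : 0 < u) (huv : u ≤ v) :
    u ^ (-K) - v ^ (-K) ≤ K * u ^ (-K - 1) * (v - u) := by
  have hderiv : ∀ x ∈ Icc u v, HasDerivWithinAt (fun x : ℝ => x ^ (-K))
      (-K * x ^ (-K - 1)) (Icc u v) x := fun x hx =>
    (hasDerivAt_rpow_const (Or.inl (hu.trans_le hx.1).ne')).hasDerivWithinAt
  have hbound : ∀ x ∈ Ico u v, ‖-K * x ^ (-K - 1)‖ ≤ K * u ^ (-K - 1) := fun x hx => by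
    have hx0 : 0 < x := hu.trans_le hx.1
    rw [norm_mul, norm_neg, Real.norm_of_nonneg hK, Real.norm_of_nonneg (rpow_pos_of_pos hx0 _).le]
    exact mul_le_mul_of_nonneg_left (rpow_le_rpow_of_nonpos hu hx.1 (by linarith)) hK
  have h := norm_image_sub_le_of_norm_deriv_le_segment' hderiv hbound v (right_mem_Icc.2 huv)
  rw [Real.norm_eq_abs] at h
  linarith [neg_abs_le (v ^ (-K) - u ^ (-K))]

lemma rpow_neg_sub_mul_log_sub_rpow_neg_le {K α v : ℝ} (hK : 0 ≤ K) (hα : 0 ≤ α) (hv : 1 ≤ v)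
    (hhalf : α * log v ≤ v / 2) :
    (v - α * log v) ^ (-K) - v ^ (-K) ≤ 2 ^ (K + 1) * K * α * log v / v ^ (K + 1) := by
  have hlog : 0 ≤ log v := log_nonneg hv
  have hu : v / 2 ≤ v - α * log v := by linarith
  have hmono : (v - α * log v) ^ (-K - 1) ≤ (v / 2) ^ (-K - 1) :=
    rpow_le_rpow_of_nonpos (by linarith) hu (by linarith)
  have hhalf_pow : (v / 2) ^ (-K - 1) = 2 ^ (K + 1) / v ^ (K + 1) := by
    rw [show -K - 1 = -(K + 1) by ring, rpow_neg (by linarith), div_rpow (by linarith) zero_le_two,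
      inv_div]
  calc (v - α * log v) ^ (-K) - v ^ (-K)
      ≤ K * (v - α * log v) ^ (-K - 1) * (v - (v - α * log v)) :=
        rpow_neg_sub_rpow_neg_le hK (by linarith) (by nlinarith)
    _ ≤ K * (v / 2) ^ (-K - 1) * (α * log v) := by
        rw [sub_sub_cancel]; gcongr
    _ = 2 ^ (K + 1) * K * α * log v / v ^ (K + 1) := by
        rw [hhalf_pow]; ring

lemma log_mul_log_rpow_neg {t : ℝ} (ht : 1 < t) (α : ℝ) :
    log (t * log t ^ (-α)) = log t - α * log (log t) := by
  rw [log_mul (by positivity) (rpow_pos_of_pos (log_pos ht) _).ne', log_rpow (log_pos ht)]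
  ring

lemma eventually_mul_log_log_le_half_log (α : ℝ) :
    ∀ᶠ t in atTop, α * log (log t) ≤ log t / 2 := by
  have h := ((isLittleO_log_id_atTop.const_mul_left α).comp_tendsto tendsto_log_atTop).bound
    (show (0 : ℝ) < 1 / 2 by norm_num)
  filter_upwards [h, tendsto_log_atTop.eventually_ge_atTop 0] with t ht hlog
  simp only [Function.comp_apply, id, Real.norm_eq_abs, abs_of_nonneg hlog] at ht
  linarith [le_abs_self (α * log (log t))]

/-- If `|p'(r)| ≤ C/(r·(log r)^(K+1))` for `r ≥ t₀`, then with `s = t·(log t)^(-α)`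
one has `|p(s) - p(t)| ≤ C·((log s)^(-K) - (log t)^(-K))/K`, and consequently
`|p(s) - p(t)| = O(log log t/(log t)^(K+1))` as `t → ∞`. -/
theorem replace_intermediate_time
    (t₀ C K α : ℝ) (ht₀ : 3 ≤ t₀) (hC : 0 < C) (hK : 1 ≤ K) (hα : 0 < α)
    (p : ℝ → ℝ)
    (hdiff : ∀ r, t₀ ≤ r → DifferentiableAt ℝ p r)
    (hd : ∀ r, t₀ ≤ r → |deriv p r| ≤ C / (r * Real.log r ^ (K + 1))) :
    (∀ t, t₀ ≤ t * Real.log t ^ (-α) → t * Real.log t ^ (-α) ≤ t →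
      |p (t * Real.log t ^ (-α)) - p t| ≤
        C * (Real.log (t * Real.log t ^ (-α)) ^ (-K) - Real.log t ^ (-K)) / K)
    ∧ ∃ C' T : ℝ, 0 < C' ∧ ∀ t, T ≤ t →
        |p (t * Real.log t ^ (-α)) - p t| ≤
          C' * Real.log (Real.log t) / Real.log t ^ (K + 1) := by
  have hK0 : 0 < K := by linarith
  have hshift : ∀ t, t₀ ≤ t * log t ^ (-α) → t * log t ^ (-α) ≤ t →
      |p (t * log t ^ (-α)) - p t| ≤ C * (log (t * log t ^ (-α)) ^ (-K) - log t ^ (-K)) / K :=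
    fun t hs hst => abs_sub_le_of_abs_deriv_le_div_mul_log_rpow hK0.ne' (by linarith) hst
      (fun r hr => hdiff r (hs.trans hr.1)) (fun r hr => hd r (hs.trans hr.1))
  refine ⟨hshift, C * α * 2 ^ (K + 1), ?_⟩
  obtain ⟨T, hT⟩ := eventually_atTop.mp <| (eventually_gt_atTop 1).and <|
    (eventually_mul_log_log_le_half_log α).and <|
      tendsto_log_atTop.eventually_ge_atTop (max 1 (2 * log t₀))
  refine ⟨T, by positivity, fun t ht => ?_⟩
  obtain ⟨ht1, hhalf, hlarge⟩ := hT t ht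
  rw [max_le_iff] at hlarge
  have hs : 0 < t * log t ^ (-α) := mul_pos (by linarith) (rpow_pos_of_pos (log_pos ht1) _)
  have hlog_s := log_mul_log_rpow_neg ht1 α
  have hα_log : 0 ≤ α * log (log t) := mul_nonneg hα.le (log_nonneg hlarge.1)
  have ht₀_s : t₀ ≤ t * log t ^ (-α) := (log_le_log_iff (by linarith) hs).1 (by linarith)
  have hs_t : t * log t ^ (-α) ≤ t := (log_le_log_iff hs (by linarith)).1 (by linarith)
  calc |p (t * log t ^ (-α)) - p t|
      ≤ C * (log (t * log t ^ (-α)) ^ (-K) - log t ^ (-K)) / K := hshift t ht₀_s hs_t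
    _ ≤ C * (2 ^ (K + 1) * K * α * log (log t) / log t ^ (K + 1)) / K := by
        rw [hlog_s]
        gcongr
        exact rpow_neg_sub_mul_log_sub_rpow_neg_le hK0.le hα.le hlarge.1 hhalf
    _ = C * α * 2 ^ (K + 1) * log (log t) / log t ^ (K + 1) := by
        field_simp
end

section
/- Let ρ : [t₀,∞) → ℝ satisfy c₇·(log t)/t ≤ ρ(t) ≤ c₈·(log t)/t for positive constants c₇ ≤ c₈, be differentiable, and satisfy ρ'(t) = −π·ρ(t)²/log t + E(t) with |E(t)| ≤ C·(log t)^(1/2)/t² for all t ≥ t₀. Then ρ(t) = (log t)/(π·t)·(1 + O((log t)^(−1/2))) as t → ∞. -/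
/-!
With `φ t = 1 / ρ t - π t / log t`, the rate equation makes the leading terms `π / log t` of
`(1 / ρ)'` and `(π t / log t)'` cancel, leaving `φ' = π / log² t - E / ρ²`, which is
`O((log t)^(-3/2))` by the lower bound on `ρ`. The majorant `t (log t)^(-3/2)` has derivative
comparable to `(log t)^(-3/2)`, so `φ t = O(t (log t)^(-3/2))`. Finally
`ρ - log t / (π t) = -ρ · (log t / (π t)) · φ`, and the upper bound on `ρ` turns this into a
relative error `O((log t)^(-1/2))`.
-/

open Real Set

theorem hasDerivAt_inv_sub_mul_div_log {ρ : ℝ → ℝ} {a e t : ℝ}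
    (hρ : HasDerivAt ρ (-(a * ρ t ^ 2 / log t) + e) t) (hρt : ρ t ≠ 0) (ht : t ≠ 0)
    (hlog : log t ≠ 0) :
    HasDerivAt (fun s => (ρ s)⁻¹ - a * s / log s) (a / log t ^ 2 - e / ρ t ^ 2) t := by
  have hquot : HasDerivAt (fun s => a * s / log s)
      ((a * 1 * log t - a * t * t⁻¹) / log t ^ 2) t :=
    ((hasDerivAt_id t).const_mul a).div (hasDerivAt_log ht) hlog
  refine ((hρ.inv hρt).sub hquot).congr_deriv ?_
  field_simp
  ring

theorem abs_sub_div_sq_le_mul_rpow {a c C L t r e : ℝ} (ha : 0 ≤ a) (hc : 0 < c) (hL : 1 ≤ L)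
    (ht : 0 < t) (hr : c * L / t ≤ r) (he : |e| ≤ C * L ^ (1 / 2 : ℝ) / t ^ 2) :
    |a / L ^ 2 - e / r ^ 2| ≤ (a + C / c ^ 2) * L ^ (-(3 / 2 : ℝ)) := by
  have hL0 : 0 < L := by linarith
  have hleading : a / L ^ 2 ≤ a * L ^ (-(3 / 2 : ℝ)) := by
    rw [div_eq_mul_inv, ← rpow_natCast, ← rpow_neg hL0.le]
    gcongr
    norm_num
  have herr : |e| / r ^ 2 ≤ C / c ^ 2 * L ^ (-(3 / 2 : ℝ)) := calc
    |e| / r ^ 2 ≤ C * L ^ (1 / 2 : ℝ) / t ^ 2 / (c * L / t) ^ 2 := by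
      gcongr
      exact (abs_nonneg e).trans he
    _ = C / c ^ 2 * (L ^ (1 / 2 : ℝ) / L ^ (2 : ℝ)) := by
      rw [rpow_two]; field_simp
    _ = C / c ^ 2 * L ^ (-(3 / 2 : ℝ)) := by
      rw [← rpow_sub hL0]; norm_num
  calc |a / L ^ 2 - e / r ^ 2| ≤ |a / L ^ 2| + |e / r ^ 2| := abs_sub _ _
    _ = a / L ^ 2 + |e| / r ^ 2 := by rw [abs_of_nonneg (by positivity), abs_div, abs_sq]
    _ ≤ _ := by rw [add_mul]; exact add_le_add hleading herr

theorem hasDerivAt_mul_log_rpow_neg {p t : ℝ} (ht : 1 < t) :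
    HasDerivAt (fun s => s * log s ^ (-p)) (log t ^ (-p) - p * log t ^ (-p - 1)) t := by
  have hlog : log t ≠ 0 := (log_pos ht).ne'
  have hpow : HasDerivAt (fun s => log s ^ (-p)) (t⁻¹ * -p * log t ^ (-p - 1)) t :=
    (hasDerivAt_log (by positivity)).rpow_const (Or.inl hlog)
  refine ((hasDerivAt_id t).mul hpow).congr_deriv ?_
  simp only [id]
  field_simp
  ring

theorem rpow_neg_div_two_le_sub_mul_rpow_neg_sub_one {p L : ℝ} (hpL : 2 * p ≤ L) (hL : 0 < L) :
    L ^ (-p) / 2 ≤ L ^ (-p) - p * L ^ (-p - 1) := by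
  have hq : 0 < L ^ (-p) := rpow_pos_of_pos hL _
  have hgap : 0 ≤ L - 2 * p := sub_nonneg.2 hpL
  rw [rpow_sub_one hL.ne', ← sub_nonneg]
  calc (0 : ℝ) ≤ L ^ (-p) * (L - 2 * p) / (2 * L) := by positivity
    _ = _ := by field_simp; ring

theorem abs_le_mul_mul_log_rpow_neg_of_abs_deriv_le {f f' : ℝ → ℝ} {a p K M : ℝ}
    (ha : 1 < a) (hpa : 2 * p ≤ log a) (hf : ∀ t, a ≤ t → HasDerivAt f (f' t) t)
    (hf' : ∀ t, a ≤ t → |f' t| ≤ K * log t ^ (-p)) (hKM : 2 * K ≤ M)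
    (hfa : |f a| ≤ M * (a * log a ^ (-p))) {t : ℝ} (ht : a ≤ t) :
    |f t| ≤ M * (t * log t ^ (-p)) := by
  have hlog : ∀ x, a ≤ x → 0 < log x ∧ 2 * p ≤ log x := fun x hx =>
    ⟨log_pos (ha.trans_le hx), hpa.trans (log_le_log (by linarith) hx)⟩
  have bound : ∀ x ∈ Ico a t, ‖f' x‖ ≤ M * (log x ^ (-p) - p * log x ^ (-p - 1)) := by
    intro x hx
    obtain ⟨hL, hpL⟩ := hlog x hx.1
    have hq : 0 < log x ^ (-p) := rpow_pos_of_pos hL _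
    have hK : 0 ≤ K := nonneg_of_mul_nonneg_left ((abs_nonneg _).trans (hf' x hx.1)) hq
    calc ‖f' x‖ ≤ K * log x ^ (-p) := hf' x hx.1
      _ ≤ M * (log x ^ (-p) / 2) := by nlinarith
      _ ≤ M * (log x ^ (-p) - p * log x ^ (-p - 1)) := by
        gcongr
        · linarith
        · exact rpow_neg_div_two_le_sub_mul_rpow_neg_sub_one hpL hL
  have hB : ∀ x, a ≤ x → HasDerivAt (fun s => M * (s * log s ^ (-p)))
      (M * (log x ^ (-p) - p * log x ^ (-p - 1))) x := fun x hx =>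
    (hasDerivAt_mul_log_rpow_neg (ha.trans_le hx)).const_mul M
  exact image_norm_le_of_norm_deriv_right_le_deriv_boundary'
    (fun x hx => (hf x hx.1).continuousAt.continuousWithinAt)
    (fun x hx => (hf x hx.1).hasDerivWithinAt) hfa
    (fun x hx => (hB x hx.1).continuousAt.continuousWithinAt)
    (fun x hx => (hB x hx.1).hasDerivWithinAt) bound ⟨ht, le_rfl⟩

theorem abs_sub_eq_mul_mul_abs_inv_sub_inv {x y : ℝ} (hx : 0 < x) (hy : 0 < y) :
    |x - y| = x * y * |x⁻¹ - y⁻¹| := by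
  rw [inv_sub_inv' hx.ne' hy.ne', abs_mul, abs_mul, abs_inv, abs_inv, abs_of_pos hx, abs_of_pos hy,
    abs_sub_comm]
  field_simp

theorem abs_inv_sub_mul_div_log_le_of_rate_equation {ρ E : ℝ → ℝ} {a c C T : ℝ}
    (ha : 0 < a) (hc : 0 < c) (hC : 0 ≤ C) (hT : exp 3 ≤ T)
    (hlb : ∀ t, T ≤ t → c * log t / t ≤ ρ t)
    (hE : ∀ t, T ≤ t → |E t| ≤ C * log t ^ (1 / 2 : ℝ) / t ^ 2)
    (hode : ∀ t, T ≤ t → HasDerivAt ρ (-(a * ρ t ^ 2 / log t) + E t) t) :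
    ∃ M, 0 < M ∧ ∀ t, T ≤ t →
      |(ρ t)⁻¹ - a * t / log t| ≤ M * (t * log t ^ (-(3 / 2 : ℝ))) := by
  have hlog : ∀ t, T ≤ t → 0 < t ∧ 3 ≤ log t := fun t ht =>
    have ht0 : 0 < t := (exp_pos 3).trans_le (hT.trans ht)
    ⟨ht0, (le_log_iff_exp_le ht0).2 (hT.trans ht)⟩
  obtain ⟨hT0, hlogT⟩ := hlog T le_rfl
  set φ := fun s => (ρ s)⁻¹ - a * s / log s
  set K := a + C / c ^ 2
  have hφ' : ∀ t, T ≤ t → HasDerivAt φ (a / log t ^ 2 - E t / ρ t ^ 2) t := fun t ht => by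
    obtain ⟨ht0, hlogt⟩ := hlog t ht
    have hρ : 0 < ρ t := (div_pos (mul_pos hc (by linarith)) ht0).trans_le (hlb t ht)
    exact hasDerivAt_inv_sub_mul_div_log (hode t ht) hρ.ne' ht0.ne' (by linarith : 0 < log t).ne'
  have hφ'_le : ∀ t, T ≤ t →
      |a / log t ^ 2 - E t / ρ t ^ 2| ≤ K * log t ^ (-(3 / 2 : ℝ)) :=
    fun t ht => abs_sub_div_sq_le_mul_rpow ha.le hc (by linarith [(hlog t ht).2]) (hlog t ht).1
      (hlb t ht) (hE t ht)
  have hφT : |φ T| ≤ max (2 * K) (|φ T| / (T * log T ^ (-(3 / 2 : ℝ)))) *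
      (T * log T ^ (-(3 / 2 : ℝ))) :=
    (div_le_iff₀ (by positivity)).1 (le_max_right _ _)
  exact ⟨_, lt_max_of_lt_left (by positivity), fun t ht =>
    abs_le_mul_mul_log_rpow_neg_of_abs_deriv_le ((log_pos_iff hT0.le).1 (by linarith))
      (by linarith) hφ' hφ'_le (le_max_left _ _) hφT ht⟩

theorem density_asymptotic_from_rate_equation_general
    (t₀ C c₇ c₈ : ℝ) (hC : 0 < C) (h₇ : 0 < c₇) (h₇₈ : c₇ ≤ c₈)
    (ρ E : ℝ → ℝ)
    (hlb : ∀ t, t₀ ≤ t → c₇ * Real.log t / t ≤ ρ t)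
    (hub : ∀ t, t₀ ≤ t → ρ t ≤ c₈ * Real.log t / t)
    (hE : ∀ t, t₀ ≤ t → |E t| ≤ C * Real.log t ^ ((1 : ℝ) / 2) / t ^ 2)
    (hode : ∀ t, t₀ ≤ t →
      HasDerivAt ρ (-(Real.pi * ρ t ^ 2 / Real.log t) + E t) t) :
    ∃ C' T : ℝ, 0 < C' ∧ ∀ t, T ≤ t →
      |ρ t - Real.log t / (Real.pi * t)| ≤
        C' * Real.log t ^ (-(1 : ℝ) / 2) * (Real.log t / (Real.pi * t)) := by
  set T := max t₀ (exp 3)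
  have h₀ : ∀ t, T ≤ t → t₀ ≤ t := fun t ht => (le_max_left _ _).trans ht
  obtain ⟨M, hM, hφ⟩ := abs_inv_sub_mul_div_log_le_of_rate_equation pi_pos h₇ hC.le
    (le_max_right _ _) (fun t ht => hlb t (h₀ t ht)) (fun t ht => hE t (h₀ t ht))
    (fun t ht => hode t (h₀ t ht))
  have hc₈ : 0 < c₈ := h₇.trans_le h₇₈
  refine ⟨c₈ * M, T, by positivity, fun t ht => ?_⟩
  have h₃ : exp 3 ≤ t := (le_max_right _ _).trans ht
  have ht0 : 0 < t := (exp_pos 3).trans_le h₃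
  have hL : 0 < log t := three_pos.trans_le ((le_log_iff_exp_le ht0).2 h₃)
  have hρ : 0 < ρ t := (div_pos (mul_pos h₇ hL) ht0).trans_le (hlb t (h₀ t ht))
  calc |ρ t - log t / (π * t)| = ρ t * (log t / (π * t)) * |(ρ t)⁻¹ - π * t / log t| := by
        rw [abs_sub_eq_mul_mul_abs_inv_sub_inv hρ (by positivity), inv_div]
    _ ≤ c₈ * log t / t * (log t / (π * t)) * (M * (t * log t ^ (-(3 / 2 : ℝ)))) := by
        gcongr
        exacts [hub t (h₀ t ht), hφ t ht]
    _ = c₈ * M * log t ^ (-(1 : ℝ) / 2) * (log t / (π * t)) := by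
        rw [show -(1 : ℝ) / 2 = 1 + -(3 / 2) by norm_num, rpow_add hL, rpow_one]
        field_simp

/-- Calculus exercise deducing the Bramson–Griffeath density asymptotic
`ρ(t) = log t/(π t)·(1 + O((log t)^(-1/2)))` from the effective rate equation
`ρ'(t) = -π·ρ(t)²/log t + E(t)` with `|E(t)| ≤ C·(log t)^(1/2)/t²` and the crude
bounds `c₇·log t/t ≤ ρ(t) ≤ c₈·log t/t`. -/
theorem density_asymptotic_from_rate_equation
    (t₀ C c₇ c₈ : ℝ) (ht₀ : 3 ≤ t₀) (hC : 0 < C) (h₇ : 0 < c₇) (h₇₈ : c₇ ≤ c₈)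
    (ρ E : ℝ → ℝ)
    (hlb : ∀ t, t₀ ≤ t → c₇ * Real.log t / t ≤ ρ t)
    (hub : ∀ t, t₀ ≤ t → ρ t ≤ c₈ * Real.log t / t)
    (hE : ∀ t, t₀ ≤ t → |E t| ≤ C * Real.log t ^ ((1 : ℝ) / 2) / t ^ 2)
    (hode : ∀ t, t₀ ≤ t →
      HasDerivAt ρ (-(Real.pi * ρ t ^ 2 / Real.log t) + E t) t) :
    ∃ C' T : ℝ, 0 < C' ∧ ∀ t, T ≤ t →
      |ρ t - Real.log t / (Real.pi * t)| ≤
        C' * Real.log t ^ (-(1 : ℝ) / 2) * (Real.log t / (Real.pi * t)) :=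
  density_asymptotic_from_rate_equation_general t₀ C c₇ c₈ hC h₇ h₇₈ ρ E hlb hub hE hode
end
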